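/- arXiv:1406.4070 — 2 statements merged into one kernel-verified Lean document; each statement's English description precedes it below -/
import Mathlib

section
/- Let C_{2k} be the even cycle and let v ∈ ℤ^{2k}_{≥0} be a point in the real cone generated by the vertex vectors V(e) (e an edge of C_{2k}) such that v_i = 0 for some index i. Then v has a unique expression as a non-negative real linear combination of the vectors V(e), and moreover all coefficients in this expression are non-negative integers; specifically, the coefficient of V(j, j+1) equals the alternating sum v_j − v_{j−1} + v_{j−2} − ⋯ ± v_i. -/
/-!
The `x`-th coordinate of `∑ j, c j • V j` is `c (x - 1) + c x`. At the zero coordinate `i` both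
summands are non-negative, so `c i = 0`; walking around the cycle from `i`, the relations
`c (x - 1) + c x = v x` then determine every coefficient as the alternating sum of the `v`'s,
an integer, which is a natural number because the coefficient is non-negative.
-/

open Finset

section AlternatingSum

variable {R : Type*} [CommRing R]

theorem eq_sum_range_alternating {a f : ℕ → R} (h0 : a 0 = 0)
    (hstep : ∀ t, a t + a (t + 1) = f t) (t : ℕ) :
    a t = ∑ s ∈ range t, (-1) ^ (t - 1 - s) * f s := by
  induction t with
  | zero => simpa using h0
  | succ t ih =>
    have hflip : ∑ s ∈ range t, (-1) ^ (t - s) * f s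
        = -∑ s ∈ range t, (-1) ^ (t - 1 - s) * f s := by
      rw [← sum_neg_distrib]
      refine sum_congr rfl fun s hs => ?_
      rw [show t - s = t - 1 - s + 1 by grind, pow_succ]
      ring
    rw [Nat.add_sub_cancel, sum_range_succ, hflip, Nat.sub_self, pow_zero, ← ih]
    linear_combination hstep t

end AlternatingSum

namespace CycleGraph

open Fin.NatCast

variable {n : ℕ} [NeZero n]

def edgeIndicator (R : Type*) [Zero R] [One R] (j x : Fin n) : R :=
  if x = j ∨ x = j + 1 then 1 else 0

theorem sum_mul_edgeIndicator {R : Type*} [Semiring R] (hn : n ≠ 1) (c : Fin n → R)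
    (x : Fin n) :
    ∑ j, c j * edgeIndicator R j x = c (x - 1) + c x := by
  have hne : x - 1 ≠ x := by
    rw [Ne, sub_eq_self, Fin.one_eq_zero_iff]; exact hn
  have hsplit : ∀ j, c j * edgeIndicator R j x
      = (if j = x then c x else 0) + (if j = x - 1 then c (x - 1) else 0) := by
    intro j
    rcases eq_or_ne j x with rfl | h1
    · simp [edgeIndicator, hne.symm]
    rcases eq_or_ne j (x - 1) with rfl | h2
    · simp [edgeIndicator, hne]
    have hx : ¬(x = j ∨ x = j + 1) := by
      rintro (rfl | rfl)
      exacts [h1 rfl, h2 (add_sub_cancel_right j 1).symm]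
    simp [edgeIndicator, hx, h1, h2]
  simp [hsplit, sum_add_distrib, add_comm]

def alternatingCoeff (v : Fin n → ℤ) (i : Fin n) (t : ℕ) : ℤ :=
  ∑ s ∈ range t, (-1) ^ (t - 1 - s) * v (i + ((s + 1 : ℕ) : Fin n))

variable {v : Fin n → ℤ} {i : Fin n} {c : Fin n → ℝ}

theorem coeff_eq_alternatingCoeff (hn : n ≠ 1) (hi : v i = 0) (hc0 : ∀ j, 0 ≤ c j)
    (hcv : ∀ x, (v x : ℝ) = ∑ j, c j * edgeIndicator ℝ j x) (t : ℕ) :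
    c (i + t) = alternatingCoeff v i t := by
  have hv (x : Fin n) : (v x : ℝ) = c (x - 1) + c x :=
    (hcv x).trans (sum_mul_edgeIndicator hn c x)
  have hci : c i = 0 := by
    have := hv i
    rw [hi, Int.cast_zero] at this
    linarith [hc0 (i - 1), hc0 i]
  simp only [alternatingCoeff, Int.cast_sum, Int.cast_mul, Int.cast_pow, Int.cast_neg, Int.cast_one]
  refine eq_sum_range_alternating (a := fun t => c (i + t)) (by simpa using hci) (fun t => ?_) t
  rw [hv, Nat.cast_succ, ← add_assoc, add_sub_cancel_right]

theorem coeff_eq_alternatingCoeff_sub (hn : n ≠ 1) (hi : v i = 0) (hc0 : ∀ j, 0 ≤ c j)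
    (hcv : ∀ x, (v x : ℝ) = ∑ j, c j * edgeIndicator ℝ j x) (j : Fin n) :
    c j = alternatingCoeff v i (j - i).val := by
  rw [← coeff_eq_alternatingCoeff hn hi hc0 hcv, Fin.cast_val_eq_self, add_sub_cancel]

theorem exists_nat_coeff_eq (hn : n ≠ 1) (hi : v i = 0) (hc0 : ∀ j, 0 ≤ c j)
    (hcv : ∀ x, (v x : ℝ) = ∑ j, c j * edgeIndicator ℝ j x) (j : Fin n) :
    ∃ m : ℕ, c j = m := by
  have hj := coeff_eq_alternatingCoeff_sub hn hi hc0 hcv j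
  have hpos : 0 ≤ alternatingCoeff v i (j - i).val := by exact_mod_cast hj ▸ hc0 j
  refine ⟨(alternatingCoeff v i (j - i).val).toNat, ?_⟩
  rw [hj]
  exact_mod_cast (Int.toNat_of_nonneg hpos).symm

end CycleGraph

open CycleGraph

open Fin.NatCast in
/-- Edges of the cycle `C_{2k}` are indexed by `j : Fin (2k)`, edge `j` joining
vertices `j` and `j+1`; `V j` is its 0/1 indicator vector. -/
theorem stmt_9 (k : ℕ) [NeZero (2 * k)]
    (V : Fin (2 * k) → Fin (2 * k) → ℝ)
    (hV : ∀ j x, V j x = if x = j ∨ x = j + 1 then 1 else 0)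
    (v : Fin (2 * k) → ℤ) (i : Fin (2 * k)) (hi : v i = 0)
    (c : Fin (2 * k) → ℝ) (hc0 : ∀ j, 0 ≤ c j)
    (hcv : ∀ x, (v x : ℝ) = ∑ j, c j * V j x) :
    (∀ c' : Fin (2 * k) → ℝ, (∀ j, 0 ≤ c' j) →
        (∀ x, (v x : ℝ) = ∑ j, c' j * V j x) → c' = c) ∧
    (∀ j, ∃ n : ℕ, c j = (n : ℝ)) ∧
    (∀ t : ℕ, t < 2 * k →
      c (i + (t : Fin (2 * k))) =
        ∑ s ∈ Finset.range t,
          (-1 : ℝ) ^ (t - 1 - s) * (v (i + ((s + 1 : ℕ) : Fin (2 * k))) : ℝ)) := by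
  have hn : 2 * k ≠ 1 := by omega
  obtain rfl : V = edgeIndicator ℝ := funext₂ hV
  refine ⟨fun c' hc0' hcv' => funext fun j => ?_, exists_nat_coeff_eq hn hi hc0 hcv,
    fun t _ => ?_⟩
  · rw [coeff_eq_alternatingCoeff_sub hn hi hc0' hcv', coeff_eq_alternatingCoeff_sub hn hi hc0 hcv]
  · rw [coeff_eq_alternatingCoeff hn hi hc0 hcv]
    simp [alternatingCoeff]
end

section
/- For lattice polytopes P and Q, μ_idp(P × Q) = max{μ_idp(P), μ_idp(Q)}, where μ_idp(R) is the smallest positive integer N such that nR is normal for all n ≥ N. -/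
/-!
Normality of `n(P × Q) = nP × nQ` is equivalent to normality of both `nP` and `nQ`: a
decomposition of a lattice point of the product splits coordinatewise, and conversely a lattice
point `x` of `nP` lifts to the lattice point `(x, n q)` of `n(P × Q)` for any lattice point `q`
of `Q`, whose decomposition projects to one of `x`. Hence the set of `n` at which the product
is normal is the intersection of those for `P` and `Q`, and the thresholds combine by `max`.
-/

open Pointwise

def IsLatticePolytope {ι : Type} [Fintype ι] (P : Set (ι → ℝ)) : Prop :=
  ∃ S : Finset (ι → ℤ), S.Nonempty ∧
    P = convexHull ℝ ((fun x : ι → ℤ => fun i => (x i : ℝ)) '' ↑S)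

def IsNormalPolytope {ι : Type} [Fintype ι] (P : Set (ι → ℝ)) : Prop :=
  ∀ n : ℕ, 0 < n → ∀ x : ι → ℤ, (fun i => (x i : ℝ)) ∈ (n : ℝ) • P →
    ∃ y : Fin n → (ι → ℤ), (∀ j, (fun i => (y j i : ℝ)) ∈ P) ∧ ∀ i, x i = ∑ j, y j i

def prodPolytope {ι κ : Type} (P : Set (ι → ℝ)) (Q : Set (κ → ℝ)) :
    Set (ι ⊕ κ → ℝ) :=
  {z | (fun i => z (Sum.inl i)) ∈ P ∧ (fun j => z (Sum.inr j)) ∈ Q}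

theorem isLeast_tail_and_eq_max {f g : ℕ → Prop} {a b c : ℕ}
    (ha : IsLeast {N | 0 < N ∧ ∀ n, N ≤ n → f n} a)
    (hb : IsLeast {N | 0 < N ∧ ∀ n, N ≤ n → g n} b)
    (hc : IsLeast {N | 0 < N ∧ ∀ n, N ≤ n → f n ∧ g n} c) :
    c = max a b := by
  apply le_antisymm
  · exact hc.2 ⟨ha.1.1.trans_le (le_max_left a b), fun n hn =>
      ⟨ha.1.2 n ((le_max_left a b).trans hn), hb.1.2 n ((le_max_right a b).trans hn)⟩⟩
  · exact max_le (ha.2 ⟨hc.1.1, fun n hn => (hc.1.2 n hn).1⟩)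
      (hb.2 ⟨hc.1.1, fun n hn => (hc.1.2 n hn).2⟩)

section

variable {ι κ : Type}

theorem smul_prodPolytope (c : ℝ) (P : Set (ι → ℝ)) (Q : Set (κ → ℝ)) :
    c • prodPolytope P Q = prodPolytope (c • P) (c • Q) := by
  ext z
  constructor
  · rintro ⟨w, ⟨hwP, hwQ⟩, rfl⟩
    exact ⟨⟨_, hwP, rfl⟩, ⟨_, hwQ, rfl⟩⟩
  · rintro ⟨⟨a, ha, hza⟩, ⟨b, hb, hzb⟩⟩
    refine ⟨Sum.elim a b, ⟨ha, hb⟩, funext ?_⟩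
    rintro (i | k)
    · exact congrFun hza i
    · exact congrFun hzb k

theorem IsLatticePolytope.exists_lattice_point_mem [Fintype ι] {P : Set (ι → ℝ)} (hP : IsLatticePolytope P) :
    ∃ p : ι → ℤ, (fun i => (p i : ℝ)) ∈ P := by
  obtain ⟨S, ⟨p, hp⟩, rfl⟩ := hP
  exact ⟨p, subset_convexHull ℝ _ ⟨p, hp, rfl⟩⟩

theorem lattice_point_nsmul_mem_smul {P : Set (ι → ℝ)} {p : ι → ℤ}
    (hp : (fun i => (p i : ℝ)) ∈ P) (n : ℕ) :
    (fun i => ((n • p) i : ℝ)) ∈ (n : ℝ) • P :=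
  ⟨_, hp, funext fun i => by simp⟩

variable [Fintype ι] [Fintype κ]

theorem IsNormalPolytope.prod {A : Set (ι → ℝ)} {B : Set (κ → ℝ)}
    (hA : IsNormalPolytope A) (hB : IsNormalPolytope B) :
    IsNormalPolytope (prodPolytope A B) := by
  intro n hn x hx
  rw [smul_prodPolytope] at hx
  obtain ⟨y, hyA, hy⟩ := hA n hn _ hx.1
  obtain ⟨z, hzB, hz⟩ := hB n hn _ hx.2
  refine ⟨fun j => Sum.elim (y j) (z j), fun j => ⟨hyA j, hzB j⟩, ?_⟩
  rintro (i | k)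
  · exact hy i
  · exact hz k

theorem IsNormalPolytope.of_prod_left {A : Set (ι → ℝ)} {B : Set (κ → ℝ)} {q : κ → ℤ}
    (hq : (fun k => (q k : ℝ)) ∈ B) (h : IsNormalPolytope (prodPolytope A B)) :
    IsNormalPolytope A := by
  intro n hn x hx
  have hlift : (fun s => ((Sum.elim x (n • q) s : ℤ) : ℝ)) ∈ (n : ℝ) • prodPolytope A B := by
    rw [smul_prodPolytope]
    exact ⟨hx, lattice_point_nsmul_mem_smul hq n⟩
  obtain ⟨u, hu, hsum⟩ := h n hn _ hlift
  exact ⟨fun j i => u j (Sum.inl i), fun j => (hu j).1, fun i => hsum (Sum.inl i)⟩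

theorem IsNormalPolytope.of_prod_right {A : Set (ι → ℝ)} {B : Set (κ → ℝ)} {p : ι → ℤ}
    (hp : (fun i => (p i : ℝ)) ∈ A) (h : IsNormalPolytope (prodPolytope A B)) :
    IsNormalPolytope B := by
  intro n hn x hx
  have hlift : (fun s => ((Sum.elim (n • p) x s : ℤ) : ℝ)) ∈ (n : ℝ) • prodPolytope A B := by
    rw [smul_prodPolytope]
    exact ⟨lattice_point_nsmul_mem_smul hp n, hx⟩
  obtain ⟨u, hu, hsum⟩ := h n hn _ hlift
  exact ⟨fun j k => u j (Sum.inr k), fun j => (hu j).2, fun k => hsum (Sum.inr k)⟩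

theorem isNormalPolytope_prodPolytope_iff {A : Set (ι → ℝ)} {B : Set (κ → ℝ)}
    {p : ι → ℤ} {q : κ → ℤ} (hp : (fun i => (p i : ℝ)) ∈ A) (hq : (fun k => (q k : ℝ)) ∈ B) :
    IsNormalPolytope (prodPolytope A B) ↔ IsNormalPolytope A ∧ IsNormalPolytope B :=
  ⟨fun h => ⟨h.of_prod_left hq, h.of_prod_right hp⟩, fun h => h.1.prod h.2⟩

end

/-- `μ_idp(P × Q) = max{μ_idp(P), μ_idp(Q)}`. -/
theorem stmt_15 {ι κ : Type} [Fintype ι] [Fintype κ]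
    (P : Set (ι → ℝ)) (Q : Set (κ → ℝ))
    (hP : IsLatticePolytope P) (hQ : IsLatticePolytope Q)
    (NP NQ NPQ : ℕ)
    (hNP : IsLeast {N : ℕ | 0 < N ∧ ∀ n, N ≤ n → IsNormalPolytope ((n : ℝ) • P)} NP)
    (hNQ : IsLeast {N : ℕ | 0 < N ∧ ∀ n, N ≤ n → IsNormalPolytope ((n : ℝ) • Q)} NQ)
    (hNPQ : IsLeast {N : ℕ | 0 < N ∧ ∀ n, N ≤ n →
      IsNormalPolytope ((n : ℝ) • prodPolytope P Q)} NPQ) :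
    NPQ = max NP NQ := by
  obtain ⟨p, hp⟩ := hP.exists_lattice_point_mem
  obtain ⟨q, hq⟩ := hQ.exists_lattice_point_mem
  have hdilate : ∀ n : ℕ, IsNormalPolytope ((n : ℝ) • prodPolytope P Q) ↔
      IsNormalPolytope ((n : ℝ) • P) ∧ IsNormalPolytope ((n : ℝ) • Q) := fun n => by
    rw [smul_prodPolytope]
    exact isNormalPolytope_prodPolytope_iff (lattice_point_nsmul_mem_smul hp n)
      (lattice_point_nsmul_mem_smul hq n)
  simp only [hdilate] at hNPQ
  exact isLeast_tail_and_eq_max hNP hNQ hNPQ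
end
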